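/- Under the interference model with guard zone Δ > 0, if (X₁ → X₂) and (X₃ → X₄) are two simultaneous successful transmissions on the same channel (so dist(X₃, X₂) ≥ (1+Δ)·dist(X₁, X₂) and dist(X₁, X₄) ≥ (1+Δ)·dist(X₃, X₄)), then dist(X₂, X₄) ≥ (Δ/2)·(dist(X₁, X₂) + dist(X₃, X₄)). -/

import Mathlib

theorem mul_add_dist_le_two_mul_dist_of_guard_zone {α : Type*} [PseudoMetricSpace α] {Δ : ℝ}
    {x₁ x₂ x₃ x₄ : α} (h₁ : (1 + Δ) * dist x₁ x₂ ≤ dist x₃ x₂)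
    (h₂ : (1 + Δ) * dist x₃ x₄ ≤ dist x₁ x₄) :
    Δ * (dist x₁ x₂ + dist x₃ x₄) ≤ 2 * dist x₂ x₄ := by
  have h₃₂ : dist x₃ x₂ ≤ dist x₃ x₄ + dist x₂ x₄ := dist_triangle_right x₃ x₂ x₄
  have h₁₄ : dist x₁ x₄ ≤ dist x₁ x₂ + dist x₂ x₄ := dist_triangle x₁ x₂ x₄
  linarith

theorem receivers_separation_general (Δ : ℝ)
    (X₁ X₂ X₃ X₄ : EuclideanSpace ℝ (Fin 2))
    (h₁ : dist X₃ X₂ ≥ (1 + Δ) * dist X₁ X₂)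
    (h₂ : dist X₁ X₄ ≥ (1 + Δ) * dist X₃ X₄) :
    dist X₂ X₄ ≥ (Δ / 2) * (dist X₁ X₂ + dist X₃ X₄) := by
  have hsep := mul_add_dist_le_two_mul_dist_of_guard_zone h₁ h₂
  linarith

/-- Under the interference model with guard zone `Δ > 0`, two simultaneous successful
receptions `X₂`, `X₄` are separated by at least `(Δ/2)` times the sum of the hop lengths. -/
theorem receivers_separation (Δ : ℝ) (hΔ : 0 < Δ)
    (X₁ X₂ X₃ X₄ : EuclideanSpace ℝ (Fin 2))
    (h₁ : dist X₃ X₂ ≥ (1 + Δ) * dist X₁ X₂)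
    (h₂ : dist X₁ X₄ ≥ (1 + Δ) * dist X₃ X₄) :
    dist X₂ X₄ ≥ (Δ / 2) * (dist X₁ X₂ + dist X₃ X₄) :=
  receivers_separation_general Δ X₁ X₂ X₃ X₄ h₁ h₂
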